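/- Let B ⊆ P be a principal coalgebra C-extension with bijective canonical entwining ψ, π: C → D a coalgebra map, ē = π(e), X = C^{co D}_ē. Then the map Λ: P ⊗ X → D ⊗ P ⊗ X, Λ = (π ⊗ id ⊗ id)∘(ψ⁻¹ ⊗ id)∘(id ⊗ Δ), makes P ⊗ X into a left D-comodule, i.e. Λ is coassociative and counital. -/
import Mathlib


open TensorProduct

variable (k C D P : Type) [Field k] [AddCommGroup C] [Module k C] [Coalgebra k C]
  [AddCommGroup D] [Module k D] [Coalgebra k D]
  [Ring P] [Algebra k P]

/-- The canonical Galois map `P ⊗ P → P ⊗ C`, `p ⊗ q ↦ p·ρ(q)`. -/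
noncomputable def canMap (ρ : P →ₗ[k] P ⊗[k] C) : P ⊗[k] P →ₗ[k] P ⊗[k] C :=
  LinearMap.rTensor C (LinearMap.mul' k P) ∘ₗ
    (TensorProduct.assoc k P P C).symm.toLinearMap ∘ₗ LinearMap.lTensor P ρ

/-- The coinvariants `B = P^{co C}`. -/
def coinv (ρ : P →ₗ[k] P ⊗[k] C) : Set P :=
  {b : P | ∀ p : P, ρ (b * p) = LinearMap.rTensor C (LinearMap.mulLeft k b) (ρ p)}

/-- The kernel of `P ⊗ₖ P → P ⊗_B P`. -/
def galRel (ρ : P →ₗ[k] P ⊗[k] C) : Submodule k (P ⊗[k] P) :=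
  Submodule.span k
    {w : P ⊗[k] P | ∃ p q b : P, b ∈ coinv k C P ρ ∧
      w = (p * b) ⊗ₜ[k] q - p ⊗ₜ[k] (b * q)}

/-- The `ē`-coinvariants `X ⊆ C`. -/
noncomputable def Xsub (π : C →ₗ[k] D) (eb : D) : Submodule k C :=
  LinearMap.ker
    ((LinearMap.lTensor C π ∘ₗ Coalgebra.comul (R := k) (A := C)) -
      (TensorProduct.mk k C D).flip eb)

/-- The map `Λ = (π ⊗ id ⊗ id)∘(ψ⁻¹ ⊗ id)∘(id ⊗ Δ) : P ⊗ C → D ⊗ (P ⊗ C)`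
(on `P ⊗ X` it is the claimed left `D`-coaction). -/
noncomputable def ΛMap (ψ : C ⊗[k] P ≃ₗ[k] P ⊗[k] C) (π : C →ₗ[k] D) :
    P ⊗[k] C →ₗ[k] D ⊗[k] (P ⊗[k] C) :=
  (TensorProduct.assoc k D P C).toLinearMap ∘ₗ
    LinearMap.rTensor C (LinearMap.rTensor P π) ∘ₗ
    LinearMap.rTensor C ψ.symm.toLinearMap ∘ₗ
    (TensorProduct.assoc k P C C).symm.toLinearMap ∘ₗ
    LinearMap.lTensor P (Coalgebra.comul (R := k) (A := C))

namespace Stmt8Aux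
set_option linter.unusedSectionVars false

open LinearMap Coalgebra

variable {k C D P : Type} [Field k] [AddCommGroup C] [Module k C] [Coalgebra k C]
  [AddCommGroup D] [Module k D] [Coalgebra k D]
  [Ring P] [Algebra k P]

/-- contraction of `a ⊗ (q ⊗ n)` by multiplication equals left mult. on `q ⊗ n`. -/
lemma mulContract (N : Type) [AddCommGroup N] [Module k N] (a : P) (y : P ⊗[k] N) :
    LinearMap.rTensor N (LinearMap.mul' k P)
      ((TensorProduct.assoc k P P N).symm (a ⊗ₜ[k] y)) =
    LinearMap.rTensor N (LinearMap.mulLeft k a) y := by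
  induction y using TensorProduct.induction_on with
  | zero => simp
  | tmul q n => simp [assoc_symm_tmul, LinearMap.mul'_apply]
  | add u v hu hv => simp only [tmul_add, map_add, hu, hv]

/-- The uncurried entwining-action map `(P ⊗ C) ⊗ P → P ⊗ C`. -/
noncomputable def TT (ψ : C ⊗[k] P ≃ₗ[k] P ⊗[k] C) : (P ⊗[k] C) ⊗[k] P →ₗ[k] P ⊗[k] C :=
  LinearMap.rTensor C (LinearMap.mul' k P) ∘ₗ (TensorProduct.assoc k P P C).symm.toLinearMap ∘ₗ
    LinearMap.lTensor P ψ.toLinearMap ∘ₗ (TensorProduct.assoc k P C P).toLinearMap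

variable (ρ : P →ₗ[k] P ⊗[k] C) (ψ : C ⊗[k] P ≃ₗ[k] P ⊗[k] C)

lemma TT_tmul (q : P) (c : C) (p : P) :
    TT ψ ((q ⊗ₜ[k] c) ⊗ₜ[k] p) = LinearMap.rTensor C (LinearMap.mulLeft k q) (ψ (c ⊗ₜ[k] p)) := by
  simp only [TT, LinearMap.comp_apply, LinearEquiv.coe_coe, assoc_tmul, lTensor_tmul]
  exact mulContract C q (ψ (c ⊗ₜ p))

variable
    (hent : ∀ q p : P,
      ρ (q * p) =
        LinearMap.rTensor C (LinearMap.mul' k P)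
          ((TensorProduct.assoc k P P C).symm
            (LinearMap.lTensor P ψ.toLinearMap
              (TensorProduct.assoc k P C P ((ρ q) ⊗ₜ[k] p)))))

include hent in
lemma hent' (q p : P) : ρ (q * p) = TT ψ (ρ q ⊗ₜ[k] p) := by
  rw [hent q p]; rfl

lemma can_tmul (q q' : P) :
    canMap k C P ρ (q ⊗ₜ[k] q') = LinearMap.rTensor C (LinearMap.mulLeft k q) (ρ q') := by
  simp only [canMap, LinearMap.comp_apply, LinearEquiv.coe_coe, lTensor_tmul]
  exact mulContract C q (ρ q')

lemma TT_mulLeft (a p : P) (y : P ⊗[k] C) :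
    TT ψ (LinearMap.rTensor C (LinearMap.mulLeft k a) y ⊗ₜ[k] p) =
      LinearMap.rTensor C (LinearMap.mulLeft k a) (TT ψ (y ⊗ₜ[k] p)) := by
  induction y using TensorProduct.induction_on with
  | zero => simp
  | tmul q c =>
      simp only [rTensor_tmul, LinearMap.mulLeft_apply, TT_tmul, LinearMap.mulLeft_mul,
        LinearMap.rTensor_comp, LinearMap.comp_apply]
  | add u v hu hv => simp only [map_add, add_tmul, hu, hv]

include hent in
lemma TT_can (p : P) (w : P ⊗[k] P) :
    TT ψ (canMap k C P ρ w ⊗ₜ[k] p) =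
      canMap k C P ρ (LinearMap.lTensor P (LinearMap.mulRight k p) w) := by
  induction w using TensorProduct.induction_on with
  | zero => simp
  | tmul q q' =>
      rw [can_tmul, TT_mulLeft, ← hent' ρ ψ hent, lTensor_tmul, LinearMap.mulRight_apply,
        can_tmul]
  | add u v hu hv => simp only [map_add, add_tmul, hu, hv]

lemma TT_one (c : C) (p : P) : TT ψ (((1 : P) ⊗ₜ[k] c) ⊗ₜ[k] p) = ψ (c ⊗ₜ[k] p) := by
  rw [TT_tmul, LinearMap.mulLeft_one, LinearMap.rTensor_id, LinearMap.id_apply]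

variable (hsurj : Function.Surjective (canMap k C P ρ))

include hent hsurj in
lemma psi_can (c : C) (p : P) :
    ∃ w : P ⊗[k] P, canMap k C P ρ w = (1 : P) ⊗ₜ[k] c ∧
      ψ (c ⊗ₜ[k] p) = canMap k C P ρ (LinearMap.lTensor P (LinearMap.mulRight k p) w) := by
  obtain ⟨w, hw⟩ := hsurj ((1 : P) ⊗ₜ[k] c)
  exact ⟨w, hw, by rw [← TT_one (ψ := ψ) c p, ← hw, TT_can ρ ψ hent]⟩

lemma rid_counit_mulLeft (a : P) (y : P ⊗[k] C) :
    TensorProduct.rid k P (LinearMap.lTensor P (counit (R := k) (A := C))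
        (LinearMap.rTensor C (LinearMap.mulLeft k a) y)) =
      a * TensorProduct.rid k P (LinearMap.lTensor P (counit (R := k) (A := C)) y) := by
  induction y using TensorProduct.induction_on with
  | zero => simp
  | tmul q c => simp [mul_smul_comm]
  | add u v hu hv => simp only [map_add, hu, hv, mul_add]

variable (hρcounit : ∀ p : P,
      TensorProduct.rid k P
        (LinearMap.lTensor P (Coalgebra.counit (R := k) (A := C)) (ρ p)) = p)

include hρcounit in
lemma counit_can (w : P ⊗[k] P) :
    TensorProduct.rid k P (LinearMap.lTensor P (counit (R := k) (A := C))
      (canMap k C P ρ w)) = LinearMap.mul' k P w := by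
  induction w using TensorProduct.induction_on with
  | zero => simp
  | tmul q q' => rw [can_tmul, rid_counit_mulLeft, hρcounit, LinearMap.mul'_apply]
  | add u v hu hv => simp only [map_add, hu, hv]

lemma mu_mulRight (p : P) (w : P ⊗[k] P) :
    LinearMap.mul' k P (LinearMap.lTensor P (LinearMap.mulRight k p) w) =
      LinearMap.mul' k P w * p := by
  induction w using TensorProduct.induction_on with
  | zero => simp
  | tmul q q' => simp [LinearMap.mul'_apply, mul_assoc]
  | add u v hu hv => simp only [map_add, hu, hv, add_mul]

include hent hsurj hρcounit in
lemma psi_counit (c : C) (p : P) :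
    TensorProduct.rid k P (LinearMap.lTensor P (counit (R := k) (A := C)) (ψ (c ⊗ₜ[k] p))) =
      counit (R := k) c • p := by
  obtain ⟨w, hw, hψ⟩ := psi_can ρ ψ hent hsurj c p
  have h1 : LinearMap.mul' k P w = counit (R := k) c • (1 : P) := by
    have := counit_can ρ hρcounit w
    rw [hw] at this
    simpa using this.symm
  rw [hψ, counit_can ρ hρcounit, mu_mulRight, h1, smul_mul_assoc, one_mul]

variable (π : C →ₗ[k] D)
variable (hπε : ∀ c : C,
      Coalgebra.counit (R := k) (π c) = Coalgebra.counit (R := k) c)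

include hent hsurj hρcounit hπε in
lemma contract_pi (y : C ⊗[k] P) :
    TensorProduct.lid k P (LinearMap.rTensor P (counit (R := k) (A := D))
        (LinearMap.rTensor P π y)) =
      TensorProduct.rid k P (LinearMap.lTensor P (counit (R := k) (A := C))
        (ψ.toLinearMap y)) := by
  induction y using TensorProduct.induction_on with
  | zero => simp
  | tmul c p =>
      simp only [rTensor_tmul, lid_tmul, LinearEquiv.coe_coe, hπε c]
      exact (psi_counit ρ ψ hent hsurj hρcounit c p).symm
  | add u v hu hv => simp only [map_add, hu, hv]

include hent hsurj hρcounit hπε in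
lemma contract_pi' (z : P ⊗[k] C) :
    TensorProduct.lid k P (LinearMap.rTensor P (counit (R := k) (A := D))
        (LinearMap.rTensor P π (ψ.symm z))) =
      TensorProduct.rid k P (LinearMap.lTensor P (counit (R := k) (A := C)) z) := by
  have := contract_pi ρ ψ hent hsurj hρcounit π hπε (ψ.symm z)
  rwa [LinearEquiv.coe_coe, LinearEquiv.apply_symm_apply] at this

/-! ### Coassociativity of the entwining -/

/-- `K = assoc ∘ (ρ ⊗ id) : P ⊗ C → P ⊗ (C ⊗ C)`. -/
noncomputable def Kmap : P ⊗[k] C →ₗ[k] P ⊗[k] (C ⊗[k] C) :=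
  (TensorProduct.assoc k P C C).toLinearMap ∘ₗ LinearMap.rTensor C ρ

/-- `R' = assoc ∘ (ψ ⊗ id) ∘ assoc⁻¹ : C ⊗ (P ⊗ C) → P ⊗ (C ⊗ C)`. -/
noncomputable def Rmap : C ⊗[k] (P ⊗[k] C) →ₗ[k] P ⊗[k] (C ⊗[k] C) :=
  (TensorProduct.assoc k P C C).toLinearMap ∘ₗ LinearMap.rTensor C ψ.toLinearMap ∘ₗ
    (TensorProduct.assoc k C P C).symm.toLinearMap

/-- `S = R' ∘ (id ⊗ ψ) ∘ assoc ∘ (Δ ⊗ id) : C ⊗ P → P ⊗ (C ⊗ C)`. -/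
noncomputable def Smap : C ⊗[k] P →ₗ[k] P ⊗[k] (C ⊗[k] C) :=
  Rmap ψ ∘ₗ LinearMap.lTensor C ψ.toLinearMap ∘ₗ (TensorProduct.assoc k C C P).toLinearMap ∘ₗ
    LinearMap.rTensor P (comul (R := k) (A := C))

/-- `Q p : C ⊗ C → P ⊗ (C ⊗ C)`. -/
noncomputable def Qmap (p : P) : C ⊗[k] C →ₗ[k] P ⊗[k] (C ⊗[k] C) :=
  Rmap ψ ∘ₗ LinearMap.lTensor C ψ.toLinearMap ∘ₗ (TensorProduct.assoc k C C P).toLinearMap ∘ₗ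
    (TensorProduct.mk k (C ⊗[k] C) P).flip p

/-- `U : P ⊗ P → P ⊗ (C ⊗ C)`. -/
noncomputable def Umap : P ⊗[k] P →ₗ[k] P ⊗[k] (C ⊗[k] C) :=
  LinearMap.rTensor (C ⊗[k] C) (LinearMap.mul' k P) ∘ₗ
    (TensorProduct.assoc k P P (C ⊗[k] C)).symm.toLinearMap ∘ₗ
    LinearMap.lTensor P (Kmap ρ ∘ₗ ρ)

/-- `H : (P ⊗ C) ⊗ (P ⊗ C) → P ⊗ (C ⊗ C)`. -/
noncomputable def Hmap : (P ⊗[k] C) ⊗[k] (P ⊗[k] C) →ₗ[k] P ⊗[k] (C ⊗[k] C) :=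
  (TensorProduct.assoc k P C C).toLinearMap ∘ₗ LinearMap.rTensor C (TT ψ) ∘ₗ
    (TensorProduct.assoc k (P ⊗[k] C) P C).symm.toLinearMap

/-- `S' p : P ⊗ C → P ⊗ (C ⊗ C)`. -/
noncomputable def Spmap (p : P) : P ⊗[k] C →ₗ[k] P ⊗[k] (C ⊗[k] C) :=
  LinearMap.rTensor (C ⊗[k] C) (LinearMap.mul' k P) ∘ₗ
    (TensorProduct.assoc k P P (C ⊗[k] C)).symm.toLinearMap ∘ₗ
    LinearMap.lTensor P (Smap ψ ∘ₗ (TensorProduct.mk k C P).flip p)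

lemma Umap_tmul (q q' : P) :
    Umap ρ (q ⊗ₜ[k] q') = LinearMap.rTensor (C ⊗[k] C) (LinearMap.mulLeft k q) (Kmap ρ (ρ q')) := by
  simp only [Umap, LinearMap.comp_apply, LinearEquiv.coe_coe, lTensor_tmul]
  exact mulContract (C ⊗[k] C) q _

lemma Hmap_tmul (x : P ⊗[k] C) (u : P) (a : C) :
    Hmap ψ (x ⊗ₜ[k] (u ⊗ₜ[k] a)) =
      TensorProduct.assoc k P C C (TT ψ (x ⊗ₜ[k] u) ⊗ₜ[k] a) := by
  simp only [Hmap, LinearMap.comp_apply, LinearEquiv.coe_coe, assoc_symm_tmul, rTensor_tmul]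

lemma assocPCC_mulLeft (f : P →ₗ[k] P) (z : P ⊗[k] C) (a : C) :
    TensorProduct.assoc k P C C (LinearMap.rTensor C f z ⊗ₜ[k] a) =
      LinearMap.rTensor (C ⊗[k] C) f (TensorProduct.assoc k P C C (z ⊗ₜ[k] a)) := by
  induction z using TensorProduct.induction_on with
  | zero => simp
  | tmul p' c' => simp
  | add u v hu hv => simp only [map_add, add_tmul, hu, hv]

include hent in
lemma Ziii (r : P) (y : P ⊗[k] C) :
    Kmap ρ (LinearMap.rTensor C (LinearMap.mulLeft k r) y) = Hmap ψ (ρ r ⊗ₜ[k] y) := by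
  induction y using TensorProduct.induction_on with
  | zero => simp
  | tmul u a =>
      rw [Hmap_tmul, ← hent' ρ ψ hent]
      simp [Kmap]
  | add u v hu hv => simp only [map_add, tmul_add, hu, hv]

lemma Zii (s : P) (d : C) (y : P ⊗[k] C) :
    LinearMap.rTensor (C ⊗[k] C) (LinearMap.mulLeft k s) (Rmap ψ (d ⊗ₜ[k] y)) =
      Hmap ψ ((s ⊗ₜ[k] d) ⊗ₜ[k] y) := by
  induction y using TensorProduct.induction_on with
  | zero => simp
  | tmul u a =>
      rw [Hmap_tmul, TT_tmul]
      simp only [Rmap, LinearMap.comp_apply, LinearEquiv.coe_coe, assoc_symm_tmul, rTensor_tmul]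
      rw [assocPCC_mulLeft]
  | add u v hu hv => simp only [map_add, tmul_add, hu, hv]

lemma Qmap_tmul (p : P) (d c : C) :
    Qmap ψ p (d ⊗ₜ[k] c) = Rmap ψ (d ⊗ₜ[k] ψ (c ⊗ₜ[k] p)) := by
  simp only [Qmap, LinearMap.comp_apply, LinearEquiv.coe_coe, TensorProduct.mk_apply,
    LinearMap.flip_apply, assoc_tmul, lTensor_tmul]

lemma Zi (p : P) (c : C) (x : P ⊗[k] C) :
    LinearMap.rTensor (C ⊗[k] C) (LinearMap.mul' k P)
      ((TensorProduct.assoc k P P (C ⊗[k] C)).symm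
        (LinearMap.lTensor P (Qmap ψ p) (TensorProduct.assoc k P C C (x ⊗ₜ[k] c)))) =
      Hmap ψ (x ⊗ₜ[k] ψ (c ⊗ₜ[k] p)) := by
  induction x using TensorProduct.induction_on with
  | zero => simp
  | tmul s d =>
      rw [assoc_tmul, lTensor_tmul, mulContract, Qmap_tmul, Zii]
  | add u v hu hv => simp only [map_add, add_tmul, hu, hv]

include hent in
lemma Zmain (p : P) (z : P ⊗[k] C) :
    LinearMap.rTensor (C ⊗[k] C) (LinearMap.mul' k P)
      ((TensorProduct.assoc k P P (C ⊗[k] C)).symm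
        (LinearMap.lTensor P (Qmap ψ p) (Kmap ρ z))) =
      Kmap ρ (TT ψ (z ⊗ₜ[k] p)) := by
  induction z using TensorProduct.induction_on with
  | zero => simp
  | tmul r c =>
      have h1 : Kmap ρ (r ⊗ₜ[k] c) = TensorProduct.assoc k P C C (ρ r ⊗ₜ[k] c) := by
        simp [Kmap]
      rw [h1, Zi, TT_tmul, Ziii ρ ψ hent]
  | add u v hu hv => simp only [map_add, tmul_add, add_tmul, hu, hv]

lemma Smap_tmul (c : C) (p : P) : Smap ψ (c ⊗ₜ[k] p) = Qmap ψ p (comul (R := k) c) := by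
  simp only [Smap, Qmap, LinearMap.comp_apply, rTensor_tmul, TensorProduct.mk_apply,
    LinearMap.flip_apply]

variable (hρcoassoc : ∀ p : P,
      TensorProduct.assoc k P C C (LinearMap.rTensor C ρ (ρ p)) =
        LinearMap.lTensor P (Coalgebra.comul (R := k) (A := C)) (ρ p))

include hent hρcoassoc in
lemma Sp_rho (p q' : P) : Spmap ψ (p := p) (ρ q') = Kmap ρ (ρ (q' * p)) := by
  have hSQ : Smap ψ ∘ₗ (TensorProduct.mk k C P).flip p =
      Qmap ψ p ∘ₗ (comul (R := k) (A := C)) := by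
    ext c; exact Smap_tmul ψ c p
  have hK : LinearMap.lTensor P (comul (R := k) (A := C)) (ρ q') = Kmap ρ (ρ q') :=
    (hρcoassoc q').symm
  rw [hent' ρ ψ hent q' p, ← Zmain ρ ψ hent p (ρ q')]
  simp only [Spmap, LinearMap.comp_apply, LinearEquiv.coe_coe, hSQ,
    LinearMap.lTensor_comp, ← hK]

lemma Sp_mulLeft (p a : P) (y : P ⊗[k] C) :
    Spmap ψ (p := p) (LinearMap.rTensor C (LinearMap.mulLeft k a) y) =
      LinearMap.rTensor (C ⊗[k] C) (LinearMap.mulLeft k a) (Spmap ψ (p := p) y) := by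
  induction y using TensorProduct.induction_on with
  | zero => simp
  | tmul q c =>
      simp only [Spmap, LinearMap.comp_apply, LinearEquiv.coe_coe, rTensor_tmul,
        LinearMap.mulLeft_apply, lTensor_tmul, TensorProduct.mk_apply, LinearMap.flip_apply]
      rw [mulContract, mulContract, LinearMap.mulLeft_mul, LinearMap.rTensor_comp,
        LinearMap.comp_apply]
  | add u v hu hv => simp only [map_add, hu, hv]

include hent hρcoassoc in
lemma Sp_can (p : P) (w : P ⊗[k] P) :
    Spmap ψ (p := p) (canMap k C P ρ w) =
      Umap ρ (LinearMap.lTensor P (LinearMap.mulRight k p) w) := by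
  induction w using TensorProduct.induction_on with
  | zero => simp
  | tmul q q' =>
      rw [can_tmul, Sp_mulLeft, Sp_rho ρ ψ hent hρcoassoc, lTensor_tmul,
        LinearMap.mulRight_apply, Umap_tmul]
  | add u v hu hv => simp only [map_add, hu, hv]

include hent hρcoassoc in
lemma U_can (w : P ⊗[k] P) :
    LinearMap.lTensor P (comul (R := k) (A := C)) (canMap k C P ρ w) = Umap ρ w := by
  induction w using TensorProduct.induction_on with
  | zero => simp
  | tmul q q' =>
      rw [can_tmul, Umap_tmul, ← LinearMap.comp_apply, LinearMap.lTensor_comp_rTensor,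
        ← LinearMap.rTensor_comp_lTensor, LinearMap.comp_apply, ← (hρcoassoc q'), Kmap,
        LinearMap.comp_apply]
      rfl
  | add u v hu hv => simp only [map_add, hu, hv]

include hent hsurj hρcoassoc in
lemma psi_coassoc (c : C) (p : P) :
    LinearMap.lTensor P (comul (R := k) (A := C)) (ψ (c ⊗ₜ[k] p)) = Smap ψ (c ⊗ₜ[k] p) := by
  obtain ⟨w, hw, hψ⟩ := psi_can ρ ψ hent hsurj c p
  have hS : Smap ψ (c ⊗ₜ[k] p) = Spmap ψ (p := p) ((1 : P) ⊗ₜ[k] c) := by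
    simp only [Spmap, LinearMap.comp_apply, LinearEquiv.coe_coe, lTensor_tmul,
      TensorProduct.mk_apply, LinearMap.flip_apply]
    rw [mulContract, LinearMap.mulLeft_one, LinearMap.rTensor_id, LinearMap.id_apply]
  rw [hψ, U_can ρ ψ hent hρcoassoc, hS, ← hw, Sp_can ρ ψ hent hρcoassoc]

include hent hsurj hρcoassoc in
lemma psi_coassoc_map :
    LinearMap.lTensor P (comul (R := k) (A := C)) ∘ₗ ψ.toLinearMap = Smap ψ :=
  TensorProduct.ext' (psi_coassoc ρ ψ hent hsurj hρcoassoc)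

lemma rTensor_psi_symm_cancel (v : (C ⊗[k] P) ⊗[k] C) :
    LinearMap.rTensor C ψ.symm.toLinearMap (LinearMap.rTensor C ψ.toLinearMap v) = v := by
  rw [← LinearMap.rTensor_comp_apply]
  simp

lemma lTensor_psi_symm_cancel (v : C ⊗[k] (C ⊗[k] P)) :
    LinearMap.lTensor C ψ.symm.toLinearMap (LinearMap.lTensor C ψ.toLinearMap v) = v := by
  rw [← LinearMap.lTensor_comp_apply]
  simp

include hent hsurj hρcoassoc in
/-- coassociativity of the inverse entwining. -/
lemma psi_symm_coassoc (z : P ⊗[k] C) :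
    LinearMap.rTensor P (comul (R := k) (A := C)) (ψ.symm z) =
      (TensorProduct.assoc k C C P).symm
        (LinearMap.lTensor C ψ.symm.toLinearMap
          ((TensorProduct.assoc k C P C)
            (LinearMap.rTensor C ψ.symm.toLinearMap
              ((TensorProduct.assoc k P C C).symm
                (LinearMap.lTensor P (comul (R := k) (A := C)) z))))) := by
  have h14 : LinearMap.lTensor P (comul (R := k) (A := C)) z = Smap ψ (ψ.symm z) := by
    have := psi_coassoc_map ρ ψ hent hsurj hρcoassoc
    calc LinearMap.lTensor P (comul (R := k) (A := C)) z
        = (LinearMap.lTensor P (comul (R := k) (A := C)) ∘ₗ ψ.toLinearMap) (ψ.symm z) := by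
          simp
      _ = Smap ψ (ψ.symm z) := by rw [this]
  rw [h14]
  simp only [Smap, Rmap, LinearMap.comp_apply, LinearEquiv.coe_coe]
  rw [LinearEquiv.symm_apply_apply, rTensor_psi_symm_cancel, LinearEquiv.apply_symm_apply,
    lTensor_psi_symm_cancel, LinearEquiv.symm_apply_apply]

/-- `Φ = (π ⊗ id) ∘ ψ⁻¹ : P ⊗ C → D ⊗ P`. -/
noncomputable def phiMap : P ⊗[k] C →ₗ[k] D ⊗[k] P :=
  LinearMap.rTensor P π ∘ₗ ψ.symm.toLinearMap

/-- `w16`-chain. -/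
noncomputable def w16 : P ⊗[k] (C ⊗[k] C) →ₗ[k] (C ⊗[k] C) ⊗[k] P :=
  (TensorProduct.assoc k C C P).symm.toLinearMap ∘ₗ
    LinearMap.lTensor C ψ.symm.toLinearMap ∘ₗ (TensorProduct.assoc k C P C).toLinearMap ∘ₗ
    LinearMap.rTensor C ψ.symm.toLinearMap ∘ₗ (TensorProduct.assoc k P C C).symm.toLinearMap

/-- `RR`-chain. -/
noncomputable def RRmap : P ⊗[k] (C ⊗[k] C) →ₗ[k] (D ⊗[k] D) ⊗[k] P :=
  (TensorProduct.assoc k D D P).symm.toLinearMap ∘ₗ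
    LinearMap.lTensor D (phiMap ψ π) ∘ₗ (TensorProduct.assoc k D P C).toLinearMap ∘ₗ
    LinearMap.rTensor C (phiMap ψ π) ∘ₗ (TensorProduct.assoc k P C C).symm.toLinearMap

lemma C1c (c' : C) (n : C ⊗[k] P) :
    LinearMap.rTensor P (TensorProduct.map π π) ((TensorProduct.assoc k C C P).symm (c' ⊗ₜ[k] n)) =
      (TensorProduct.assoc k D D P).symm (π c' ⊗ₜ[k] LinearMap.rTensor P π n) := by
  induction n using TensorProduct.induction_on with
  | zero => simp
  | tmul c'' q' => simp
  | add u v hu hv => simp only [map_add, tmul_add, hu, hv]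

lemma C1b (m : C ⊗[k] P) (c₂ : C) :
    LinearMap.rTensor P (TensorProduct.map π π)
      ((TensorProduct.assoc k C C P).symm
        (LinearMap.lTensor C ψ.symm.toLinearMap ((TensorProduct.assoc k C P C) (m ⊗ₜ[k] c₂)))) =
      (TensorProduct.assoc k D D P).symm
        (LinearMap.lTensor D (phiMap ψ π)
          ((TensorProduct.assoc k D P C) (LinearMap.rTensor P π m ⊗ₜ[k] c₂))) := by
  induction m using TensorProduct.induction_on with
  | zero => simp
  | tmul c' q =>
      simp only [assoc_tmul, lTensor_tmul, rTensor_tmul]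
      rw [C1c]
      rfl
  | add u v hu hv => simp only [map_add, add_tmul, hu, hv]

lemma C1' (v : P ⊗[k] (C ⊗[k] C)) :
    LinearMap.rTensor P (TensorProduct.map π π) (w16 ψ v) = RRmap ψ π v := by
  induction v using TensorProduct.induction_on with
  | zero => simp
  | tmul p y =>
      induction y using TensorProduct.induction_on with
      | zero => simp
      | tmul c₁ c₂ =>
          simp only [w16, RRmap, LinearMap.comp_apply, LinearEquiv.coe_coe, assoc_symm_tmul,
            rTensor_tmul]
          exact C1b ψ π (ψ.symm (p ⊗ₜ c₁)) c₂
      | add u v hu hv => simp only [tmul_add, map_add, hu, hv]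
  | add u v hu hv => simp only [map_add, hu, hv]

variable (hπΔ : ∀ c : C,
      Coalgebra.comul (R := k) (π c) = TensorProduct.map π π (Coalgebra.comul c))

include hent hsurj hρcoassoc hπΔ in
lemma C1 (z : P ⊗[k] C) :
    LinearMap.rTensor P (comul (R := k) (A := D)) (phiMap ψ π z) =
      RRmap ψ π (LinearMap.lTensor P (comul (R := k) (A := C)) z) := by
  have hcomp : (comul (R := k) (A := D)) ∘ₗ π = TensorProduct.map π π ∘ₗ comul (R := k) :=
    LinearMap.ext hπΔ
  rw [phiMap, LinearMap.comp_apply, ← LinearMap.rTensor_comp_apply, hcomp,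
    LinearMap.rTensor_comp, LinearMap.comp_apply, ← C1' (ψ := ψ) (π := π)]
  congr 1
  simp only [w16, LinearMap.comp_apply, LinearEquiv.coe_coe]
  exact psi_symm_coassoc ρ ψ hent hsurj hρcoassoc z

/-- counit contraction `P ⊗ C → P`. -/
noncomputable def cMap : P ⊗[k] C →ₗ[k] P :=
  (TensorProduct.rid k P).toLinearMap ∘ₗ LinearMap.lTensor P (counit (R := k) (A := C))

lemma Lambda_eq : ΛMap k C D P ψ π =
    (TensorProduct.assoc k D P C).toLinearMap ∘ₗ LinearMap.rTensor C (phiMap ψ π) ∘ₗ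
      (TensorProduct.assoc k P C C).symm.toLinearMap ∘ₗ
      LinearMap.lTensor P (comul (R := k) (A := C)) := by
  rw [ΛMap, phiMap, LinearMap.rTensor_comp]
  rfl

lemma N1 (v : D ⊗[k] P) (c : C) :
    TensorProduct.lid k (P ⊗[k] C)
      (LinearMap.rTensor (P ⊗[k] C) (counit (R := k) (A := D))
        (TensorProduct.assoc k D P C (v ⊗ₜ[k] c))) =
      (TensorProduct.lid k P (LinearMap.rTensor P (counit (R := k) (A := D)) v)) ⊗ₜ[k] c := by
  induction v using TensorProduct.induction_on with
  | zero => simp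
  | tmul d q => simp [smul_tmul']
  | add u v hu hv => simp only [map_add, add_tmul, hu, hv]

include hent hsurj hρcounit hπε in
lemma N2 (u : (P ⊗[k] C) ⊗[k] C) :
    TensorProduct.lid k (P ⊗[k] C)
      (LinearMap.rTensor (P ⊗[k] C) (counit (R := k) (A := D))
        (TensorProduct.assoc k D P C (LinearMap.rTensor C (phiMap ψ π) u))) =
      LinearMap.rTensor C (cMap) u := by
  induction u using TensorProduct.induction_on with
  | zero => simp
  | tmul z' c =>
      rw [rTensor_tmul, N1, rTensor_tmul]
      congr 1
      have h := contract_pi' ρ ψ hent hsurj hρcounit π hπε z'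
      rw [phiMap, LinearMap.comp_apply]
      simp only [LinearEquiv.coe_coe] at h ⊢
      rw [h]
      rfl
  | add u v hu hv => simp only [map_add, hu, hv]

lemma N3 (p : P) (u : C ⊗[k] C) :
    LinearMap.rTensor C (cMap) ((TensorProduct.assoc k P C C).symm (p ⊗ₜ[k] u)) =
      p ⊗ₜ[k] (TensorProduct.lid k C (LinearMap.rTensor C (counit (R := k) (A := C)) u)) := by
  induction u using TensorProduct.induction_on with
  | zero => simp
  | tmul c₁ c₂ =>
      simp only [assoc_symm_tmul, rTensor_tmul, cMap, LinearMap.comp_apply, lTensor_tmul,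
        LinearEquiv.coe_coe, rid_tmul, lid_tmul]
      rw [smul_tmul]
  | add u v hu hv => simp only [map_add, tmul_add, hu, hv]

include hent hsurj hρcounit hπε in
lemma counit_lambda (z : P ⊗[k] C) :
    TensorProduct.lid k (P ⊗[k] C)
      (LinearMap.rTensor (P ⊗[k] C) (counit (R := k) (A := D))
        (ΛMap k C D P ψ π z)) = z := by
  rw [Lambda_eq]
  simp only [LinearMap.comp_apply, LinearEquiv.coe_coe]
  rw [N2 ρ ψ hent hsurj hρcounit π hπε]
  induction z using TensorProduct.induction_on with
  | zero => simp
  | tmul p c =>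
      rw [lTensor_tmul, N3, Coalgebra.rTensor_counit_comul]
      simp
  | add u v hu hv => simp only [map_add, hu, hv]

/-! ### Coassociativity of `Λ` -/

/-- rebracketing `((D ⊗ D) ⊗ P) ⊗ C → D ⊗ (D ⊗ (P ⊗ C))`. -/
noncomputable def Theta : ((D ⊗[k] D) ⊗[k] P) ⊗[k] C →ₗ[k] D ⊗[k] (D ⊗[k] (P ⊗[k] C)) :=
  LinearMap.lTensor D (TensorProduct.assoc k D P C).toLinearMap ∘ₗ
    (TensorProduct.assoc k D (D ⊗[k] P) C).toLinearMap ∘ₗ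
    LinearMap.rTensor C (TensorProduct.assoc k D D P).toLinearMap

/-- `Λ' : P ⊗ (C ⊗ C) → D ⊗ (P ⊗ C)`, `Λ` without the comultiplication. -/
noncomputable def LambdaAux : P ⊗[k] (C ⊗[k] C) →ₗ[k] D ⊗[k] (P ⊗[k] C) :=
  (TensorProduct.assoc k D P C).toLinearMap ∘ₗ LinearMap.rTensor C (phiMap ψ π) ∘ₗ
    (TensorProduct.assoc k P C C).symm.toLinearMap

lemma Lambda_eq' : ΛMap k C D P ψ π =
    LambdaAux ψ π ∘ₗ LinearMap.lTensor P (comul (R := k) (A := C)) := by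
  rw [Lambda_eq, LambdaAux]
  rfl

lemma N4a (y : D ⊗[k] D) (q : P) (c : C) :
    TensorProduct.assoc k D D (P ⊗[k] C) (y ⊗ₜ[k] (q ⊗ₜ[k] c)) = Theta ((y ⊗ₜ[k] q) ⊗ₜ[k] c) := by
  induction y using TensorProduct.induction_on with
  | zero => simp [Theta]
  | tmul d₁ d₂ => simp [Theta]
  | add u v hu hv => simp only [add_tmul, map_add, hu, hv]

lemma N4b (v : D ⊗[k] P) (c : C) :
    TensorProduct.assoc k D D (P ⊗[k] C)
      (LinearMap.rTensor (P ⊗[k] C) (comul (R := k) (A := D))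
        (TensorProduct.assoc k D P C (v ⊗ₜ[k] c))) =
      Theta ((LinearMap.rTensor P (comul (R := k) (A := D)) v) ⊗ₜ[k] c) := by
  induction v using TensorProduct.induction_on with
  | zero => simp
  | tmul d q => rw [assoc_tmul, rTensor_tmul, N4a, rTensor_tmul]
  | add u v hu hv => simp only [map_add, add_tmul, hu, hv]

lemma N4 (u : (P ⊗[k] C) ⊗[k] C) :
    TensorProduct.assoc k D D (P ⊗[k] C)
      (LinearMap.rTensor (P ⊗[k] C) (comul (R := k) (A := D))
        (TensorProduct.assoc k D P C (LinearMap.rTensor C (phiMap ψ π) u))) =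
      Theta (LinearMap.rTensor C
        (LinearMap.rTensor P (comul (R := k) (A := D)) ∘ₗ phiMap ψ π) u) := by
  induction u using TensorProduct.induction_on with
  | zero => simp
  | tmul z' c => rw [rTensor_tmul, N4b, rTensor_tmul, LinearMap.comp_apply]
  | add u v hu hv => simp only [map_add, hu, hv]

lemma N6 (p : P) (y : C ⊗[k] C) :
    LinearMap.rTensor C (LinearMap.lTensor P (comul (R := k) (A := C)))
      ((TensorProduct.assoc k P C C).symm (p ⊗ₜ[k] y)) =
      LinearMap.rTensor C (TensorProduct.mk k P (C ⊗[k] C) p)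
        (LinearMap.rTensor C (comul (R := k) (A := C)) y) := by
  induction y using TensorProduct.induction_on with
  | zero => simp
  | tmul c₁ c₂ => simp
  | add u v hu hv => simp only [map_add, tmul_add, hu, hv]

lemma N8b (v : D ⊗[k] P) (c₂ : C) :
    LinearMap.lTensor D (LinearMap.lTensor P (comul (R := k) (A := C)))
      (TensorProduct.assoc k D P C (v ⊗ₜ[k] c₂)) =
      TensorProduct.assoc k D P (C ⊗[k] C) (v ⊗ₜ[k] (comul (R := k) c₂)) := by
  induction v using TensorProduct.induction_on with
  | zero => simp
  | tmul d q => simp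
  | add u v hu hv => simp only [map_add, add_tmul, hu, hv]

lemma N8 (p : P) (y : C ⊗[k] C) :
    LinearMap.lTensor D (LinearMap.lTensor P (comul (R := k) (A := C)))
      (TensorProduct.assoc k D P C
        (LinearMap.rTensor C (phiMap ψ π) ((TensorProduct.assoc k P C C).symm (p ⊗ₜ[k] y)))) =
      TensorProduct.assoc k D P (C ⊗[k] C)
        (LinearMap.rTensor (C ⊗[k] C) (phiMap ψ π)
          ((TensorProduct.assoc k P C (C ⊗[k] C)).symm
            (p ⊗ₜ[k] LinearMap.lTensor C (comul (R := k) (A := C)) y))) := by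
  induction y using TensorProduct.induction_on with
  | zero => simp
  | tmul c₁ c₂ =>
      rw [assoc_symm_tmul, rTensor_tmul, N8b, lTensor_tmul, assoc_symm_tmul, rTensor_tmul]
  | add u v hu hv => simp only [map_add, tmul_add, hu, hv]

lemma N9'' (d : D) (n : D ⊗[k] P) (c₃ : C) :
    Theta ((TensorProduct.assoc k D D P).symm (d ⊗ₜ[k] n) ⊗ₜ[k] c₃) =
      d ⊗ₜ[k] (TensorProduct.assoc k D P C (n ⊗ₜ[k] c₃)) := by
  induction n using TensorProduct.induction_on with
  | zero => simp
  | tmul d' q' => simp [Theta]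
  | add u v hu hv => simp only [map_add, tmul_add, add_tmul, hu, hv]

lemma N9' (v : D ⊗[k] P) (c₂ c₃ : C) :
    Theta ((TensorProduct.assoc k D D P).symm
        (LinearMap.lTensor D (phiMap ψ π) (TensorProduct.assoc k D P C (v ⊗ₜ[k] c₂))) ⊗ₜ[k] c₃) =
      LinearMap.lTensor D (LambdaAux ψ π)
        (TensorProduct.assoc k D P (C ⊗[k] C) (v ⊗ₜ[k] (c₂ ⊗ₜ[k] c₃))) := by
  induction v using TensorProduct.induction_on with
  | zero => simp
  | tmul d q =>
      rw [assoc_tmul, lTensor_tmul, N9'', assoc_tmul, lTensor_tmul]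
      congr 1
  | add u v hu hv => simp only [map_add, add_tmul, hu, hv]

set_option maxHeartbeats 1000000 in
lemma N9 (p : P) (t : C ⊗[k] (C ⊗[k] C)) :
    Theta (LinearMap.rTensor C (RRmap ψ π)
        (LinearMap.rTensor C (TensorProduct.mk k P (C ⊗[k] C) p)
          ((TensorProduct.assoc k C C C).symm t))) =
      LinearMap.lTensor D (LambdaAux ψ π)
        (TensorProduct.assoc k D P (C ⊗[k] C)
          (LinearMap.rTensor (C ⊗[k] C) (phiMap ψ π)
            ((TensorProduct.assoc k P C (C ⊗[k] C)).symm (p ⊗ₜ[k] t)))) := by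
  induction t using TensorProduct.induction_on with
  | zero => simp
  | tmul c₁ y =>
      induction y using TensorProduct.induction_on with
      | zero => simp
      | tmul c₂ c₃ =>
          rw [assoc_symm_tmul, rTensor_tmul, rTensor_tmul, TensorProduct.mk_apply]
          have hRR : RRmap ψ π (p ⊗ₜ[k] (c₁ ⊗ₜ[k] c₂)) =
              (TensorProduct.assoc k D D P).symm
                (LinearMap.lTensor D (phiMap ψ π)
                  (TensorProduct.assoc k D P C (phiMap ψ π (p ⊗ₜ[k] c₁) ⊗ₜ[k] c₂))) := by
            simp only [RRmap, LinearMap.comp_apply, LinearEquiv.coe_coe, assoc_symm_tmul,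
              rTensor_tmul]
          rw [hRR, N9', assoc_symm_tmul, rTensor_tmul]
      | add u v hu hv => simp only [map_add, tmul_add, hu, hv]
  | add u v hu hv => simp only [map_add, tmul_add, hu, hv]

include hent hsurj hρcoassoc hπΔ in
lemma C1map : LinearMap.rTensor P (comul (R := k) (A := D)) ∘ₗ phiMap ψ π =
    RRmap ψ π ∘ₗ LinearMap.lTensor P (comul (R := k) (A := C)) := by
  apply LinearMap.ext
  intro z
  exact C1 ρ ψ hent hsurj π hρcoassoc hπΔ z

include hent hsurj hρcoassoc hπΔ in
set_option maxHeartbeats 2000000 in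
lemma coassoc_lambda (z : P ⊗[k] C) :
    TensorProduct.assoc k D D (P ⊗[k] C)
      (LinearMap.rTensor (P ⊗[k] C) (comul (R := k) (A := D)) (ΛMap k C D P ψ π z)) =
      LinearMap.lTensor D (ΛMap k C D P ψ π) (ΛMap k C D P ψ π z) := by
  induction z using TensorProduct.induction_on with
  | zero => simp
  | tmul p c =>
      have hΛ : ΛMap k C D P ψ π (p ⊗ₜ[k] c) =
          TensorProduct.assoc k D P C
            (LinearMap.rTensor C (phiMap ψ π)
              ((TensorProduct.assoc k P C C).symm (p ⊗ₜ[k] comul (R := k) c))) := by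
        rw [Lambda_eq]
        simp only [LinearMap.comp_apply, LinearEquiv.coe_coe, lTensor_tmul]
      rw [hΛ, N4]
      rw [C1map ρ ψ hent hsurj π hρcoassoc hπΔ, LinearMap.rTensor_comp, LinearMap.comp_apply, N6]
      rw [show LinearMap.rTensor C (comul (R := k) (A := C)) (comul (R := k) c) =
            (TensorProduct.assoc k C C C).symm
              (LinearMap.lTensor C (comul (R := k) (A := C)) (comul (R := k) c)) from
          (Coalgebra.coassoc_symm_apply (R := k) c).symm]
      rw [N9]
      rw [Lambda_eq']
      rw [LinearMap.lTensor_comp, LinearMap.comp_apply]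
      congr 1
      have := N8 (ψ := ψ) (π := π) p (comul (R := k) c)
      rw [← this]
  | add u v hu hv => simp only [map_add, hu, hv]

/-! ### `Λ` preserves `P ⊗ X` -/

/-- the defining map of `Xsub`. -/
noncomputable def gmap (eb : D) : C →ₗ[k] C ⊗[k] D :=
  (LinearMap.lTensor C π ∘ₗ Coalgebra.comul (R := k) (A := C)) -
    (TensorProduct.mk k C D).flip eb

lemma Xsub_eq_ker (eb : D) : Xsub k C D π eb = LinearMap.ker (gmap π eb) := rfl

lemma mem_Xsub {eb : D} {x : C} (hx : x ∈ Xsub k C D π eb) :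
    LinearMap.lTensor C π (comul (R := k) x) = x ⊗ₜ[k] eb := by
  have : gmap π eb x = 0 := hx
  rw [gmap, LinearMap.sub_apply, sub_eq_zero] at this
  simpa using this

lemma Na (u : (C ⊗[k] C) ⊗[k] C) :
    LinearMap.lTensor C (LinearMap.lTensor C π) (TensorProduct.assoc k C C C u) =
      TensorProduct.assoc k C C D (LinearMap.lTensor (C ⊗[k] C) π u) := by
  induction u using TensorProduct.induction_on with
  | zero => simp
  | tmul y c =>
      induction y using TensorProduct.induction_on with
      | zero => simp
      | tmul a b => simp
      | add s t hs ht => simp only [add_tmul, map_add, hs, ht]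
  | add u v hu hv => simp only [map_add, hu, hv]

lemma Nb (d : D) (u : C ⊗[k] C) :
    LinearMap.lTensor C ((TensorProduct.mk k C D).flip d) u =
      TensorProduct.assoc k C C D (u ⊗ₜ[k] d) := by
  induction u using TensorProduct.induction_on with
  | zero => simp
  | tmul a b => simp
  | add s t hs ht => simp only [map_add, add_tmul, hs, ht]

lemma delta_ker {eb : D} {x : C} (hx : x ∈ Xsub k C D π eb) :
    LinearMap.lTensor C (gmap π eb) (comul (R := k) x) = 0 := by
  rw [gmap, LinearMap.lTensor_sub, LinearMap.sub_apply, sub_eq_zero, LinearMap.lTensor_comp,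
    LinearMap.comp_apply, ← Coalgebra.coassoc_apply, Na, ← LinearMap.comp_apply,
    LinearMap.lTensor_comp_rTensor, ← LinearMap.rTensor_comp_lTensor, LinearMap.comp_apply,
    mem_Xsub π hx, rTensor_tmul, Nb]

lemma delta_exists (eb : D) :
    ∃ δ : (Xsub k C D π eb) →ₗ[k] C ⊗[k] (Xsub k C D π eb),
      ∀ x : (Xsub k C D π eb),
        LinearMap.lTensor C (Xsub k C D π eb).subtype (δ x) = comul (R := k) (x : C) := by
  set X := Xsub k C D π eb with hX
  have hker : X = LinearMap.ker (gmap π eb) := rfl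
  have hinj : Function.Injective (LinearMap.lTensor C X.subtype) :=
    Module.Flat.lTensor_preserves_injective_linearMap X.subtype (Submodule.injective_subtype X)
  have hex : Function.Exact (LinearMap.lTensor C X.subtype)
      (LinearMap.lTensor C (gmap π eb)) := by
    rw [hker]
    exact Module.Flat.lTensor_exact C (LinearMap.exact_subtype_ker_map (gmap π eb))
  have hmem : ∀ x : X, comul (R := k) (x : C) ∈
      LinearMap.range (LinearMap.lTensor C X.subtype) := fun x =>
    (hex (comul (R := k) (x : C))).mp (delta_ker π x.2)
  set ι := LinearMap.lTensor C X.subtype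
  set e' := LinearEquiv.ofInjective ι hinj
  refine ⟨e'.symm.toLinearMap ∘ₗ
    LinearMap.codRestrict (LinearMap.range ι) (comul (R := k) ∘ₗ X.subtype) (fun x => hmem x), ?_⟩
  intro x
  have h1 : ∀ y : LinearMap.range ι, ι (e'.symm y) = (y : C ⊗[k] C) := by
    intro y
    have h2 : (↑(e' (e'.symm y)) : C ⊗[k] C) = ι (e'.symm y) :=
      LinearEquiv.ofInjective_apply ι (e'.symm y)
    rw [e'.apply_symm_apply] at h2
    exact h2.symm
  simp only [LinearMap.comp_apply, LinearEquiv.coe_coe]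
  rw [h1]
  rfl

lemma Mb (eb : D) (v' : D ⊗[k] P) (x : (Xsub k C D π eb)) :
    TensorProduct.assoc k D P C (v' ⊗ₜ[k] (Xsub k C D π eb).subtype x) =
      LinearMap.lTensor D (LinearMap.lTensor P (Xsub k C D π eb).subtype)
        (TensorProduct.assoc k D P (Xsub k C D π eb) (v' ⊗ₜ[k] x)) := by
  induction v' using TensorProduct.induction_on with
  | zero => simp
  | tmul d q => simp
  | add s t hs ht => simp only [map_add, add_tmul, hs, ht]

set_option synthInstance.maxHeartbeats 1000000 in
lemma Ma (eb : D) (p : P) (u : C ⊗[k] (Xsub k C D π eb)) :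
    TensorProduct.assoc k D P C
      (LinearMap.rTensor C (phiMap ψ π)
        ((TensorProduct.assoc k P C C).symm
          (p ⊗ₜ[k] LinearMap.lTensor C (Xsub k C D π eb).subtype u))) =
      LinearMap.lTensor D (LinearMap.lTensor P (Xsub k C D π eb).subtype)
        (TensorProduct.assoc k D P (Xsub k C D π eb)
          (LinearMap.rTensor (Xsub k C D π eb) (phiMap ψ π)
            ((TensorProduct.assoc k P C (Xsub k C D π eb)).symm (p ⊗ₜ[k] u)))) := by
  induction u using TensorProduct.induction_on with
  | zero => simp
  | tmul c' x' => rw [lTensor_tmul, assoc_symm_tmul, assoc_symm_tmul, rTensor_tmul,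
      rTensor_tmul, Mb]
  | add s t hs ht => simp only [map_add, tmul_add, hs, ht]

lemma lambda_mem (eb : D) (v : P ⊗[k] (Xsub k C D π eb)) :
    ΛMap k C D P ψ π (LinearMap.lTensor P (Xsub k C D π eb).subtype v) ∈
      LinearMap.range (LinearMap.lTensor D
        (LinearMap.lTensor P (Xsub k C D π eb).subtype)) := by
  obtain ⟨δ, hδ⟩ := delta_exists π eb
  have hmapeq : ∀ v : P ⊗[k] (Xsub k C D π eb),
      ΛMap k C D P ψ π (LinearMap.lTensor P (Xsub k C D π eb).subtype v) =
      LinearMap.lTensor D (LinearMap.lTensor P (Xsub k C D π eb).subtype)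
        (TensorProduct.assoc k D P (Xsub k C D π eb)
          (LinearMap.rTensor (Xsub k C D π eb) (phiMap ψ π)
            ((TensorProduct.assoc k P C (Xsub k C D π eb)).symm
              (LinearMap.lTensor P δ v)))) := by
    intro v
    induction v using TensorProduct.induction_on with
    | zero => simp
    | tmul p x =>
        rw [Lambda_eq]
        simp only [LinearMap.comp_apply, LinearEquiv.coe_coe, lTensor_tmul]
        have hδ' : comul (R := k) ((Xsub k C D π eb).subtype x) =
            LinearMap.lTensor C (Xsub k C D π eb).subtype (δ x) := (hδ x).symm
        rw [hδ', Ma]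
    | add s t hs ht => simp only [map_add, hs, ht]
  exact ⟨_, (hmapeq v).symm⟩

end Stmt8Aux

/-- for a principal coalgebra `C`-extension with bijective canonical
entwining `ψ` and a coalgebra map `π : C → D`, the map `Λ` makes `P ⊗ X` a left
`D`-comodule: it preserves `P ⊗ X`, and is counital and coassociative on it. -/
theorem stmt8
    (ρ : P →ₗ[k] P ⊗[k] C)
    (hρcounit : ∀ p : P,
      TensorProduct.rid k P
        (LinearMap.lTensor P (Coalgebra.counit (R := k) (A := C)) (ρ p)) = p)
    (hρcoassoc : ∀ p : P,
      TensorProduct.assoc k P C C (LinearMap.rTensor C ρ (ρ p)) =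
        LinearMap.lTensor P (Coalgebra.comul (R := k) (A := C)) (ρ p))
    (e : C) (he_counit : Coalgebra.counit (R := k) e = 1)
    (he_comul : Coalgebra.comul (R := k) e = e ⊗ₜ[k] e)
    (h1 : ρ 1 = 1 ⊗ₜ[k] e)
    (hsurj : Function.Surjective (canMap k C P ρ))
    (hker : LinearMap.ker (canMap k C P ρ) = galRel k C P ρ)
    (ψ : C ⊗[k] P ≃ₗ[k] P ⊗[k] C)
    (hent : ∀ q p : P,
      ρ (q * p) =
        LinearMap.rTensor C (LinearMap.mul' k P)
          ((TensorProduct.assoc k P P C).symm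
            (LinearMap.lTensor P ψ.toLinearMap
              (TensorProduct.assoc k P C P ((ρ q) ⊗ₜ[k] p)))))
    (hproj : ∃ σ : P →ₗ[k] P ⊗[k] P,
      (∀ p : P, LinearMap.mul' k P (σ p) = p) ∧
      (∀ p : P, σ p ∈
        Submodule.span k {w : P ⊗[k] P | ∃ b ∈ coinv k C P ρ, ∃ q : P, w = b ⊗ₜ[k] q}) ∧
      (∀ b ∈ coinv k C P ρ, ∀ p : P,
        σ (b * p) = LinearMap.rTensor P (LinearMap.mulLeft k b) (σ p)) ∧
      (∀ p : P,
        LinearMap.rTensor C σ (ρ p) =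
          (TensorProduct.assoc k P P C).symm (LinearMap.lTensor P ρ (σ p))))
    (π : C →ₗ[k] D)
    (hπΔ : ∀ c : C,
      Coalgebra.comul (R := k) (π c) = TensorProduct.map π π (Coalgebra.comul c))
    (hπε : ∀ c : C,
      Coalgebra.counit (R := k) (π c) = Coalgebra.counit (R := k) c) :
    ∀ w ∈ LinearMap.range (LinearMap.lTensor P (Xsub k C D π (π e)).subtype),
      -- `Λ` maps `P ⊗ X` into `D ⊗ (P ⊗ X)`
      ΛMap k C D P ψ π w ∈
        LinearMap.range (LinearMap.lTensor D
          (LinearMap.lTensor P (Xsub k C D π (π e)).subtype)) ∧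
      -- counitality
      TensorProduct.lid k (P ⊗[k] C)
        (LinearMap.rTensor (P ⊗[k] C) (Coalgebra.counit (R := k) (A := D))
          (ΛMap k C D P ψ π w)) = w ∧
      -- coassociativity
      TensorProduct.assoc k D D (P ⊗[k] C)
        (LinearMap.rTensor (P ⊗[k] C) (Coalgebra.comul (R := k) (A := D))
          (ΛMap k C D P ψ π w)) =
        LinearMap.lTensor D (ΛMap k C D P ψ π) (ΛMap k C D P ψ π w) := by
  intro w hw
  obtain ⟨v, rfl⟩ := hw
  exact ⟨Stmt8Aux.lambda_mem ψ π (π e) v,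
    Stmt8Aux.counit_lambda ρ ψ hent hsurj hρcounit π hπε _,
    Stmt8Aux.coassoc_lambda ρ ψ hent hsurj π hρcoassoc hπΔ _⟩
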